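/- Let S(n) = Σ_{k=0}^{n} binom(n,k)^2 · binom(n−k, k). Then 3 does not divide S(n) for any nonnegative integer n. -/

import Mathlib

/-- `S(n) = Σ_{k=0}^n binom(n,k)^2 binom(n-k,k)`. -/
def Sseq (n : ℕ) : ℕ :=
  ∑ k ∈ Finset.range (n + 1), n.choose k ^ 2 * (n - k).choose k

/-!
By Lucas's theorem, for a prime `p` and digits `r, s < p` the summand
`T(n, k) = binom(n,k)^2 binom(n-k,k)` satisfies `T(pa+r, pb+s) ≡ T(a, b) T(r, s) (mod p)`:
if `s ≤ r` and `b ≤ a` then `pa+r - (pb+s)` has last digit `r - s`, and otherwise both sides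
vanish. Summing over `b` and `s` gives `S(pa+r) ≡ S(a) S(r) (mod p)`, so `S(n)` is congruent to
the product of the `S` of the base-`p` digits of `n`. For `p = 3` these are `S(0) = 1`,
`S(1) = 1` and `S(2) = 5`, none divisible by `3`.
-/

open Finset

theorem Finset.sum_range_mul_eq_sum_sum {M : Type*} [AddCommMonoid M] (p m : ℕ) (g : ℕ → M) :
    ∑ k ∈ range (p * m), g k = ∑ b ∈ range m, ∑ s ∈ range p, g (p * b + s) := by
  induction m with
  | zero => simp
  | succ m ih => rw [Nat.mul_succ, sum_range_add, ih, sum_range_succ]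

def Sterm (n k : ℕ) : ℕ := n.choose k ^ 2 * (n - k).choose k

theorem Sseq_eq_sum_range_Sterm {n m : ℕ} (h : n < m) :
    Sseq n = ∑ k ∈ range m, Sterm n k := by
  refine sum_subset (range_subset_range.mpr h) fun k _ hk => ?_
  simp only [mem_range, not_lt] at hk
  simp [Nat.choose_eq_zero_of_lt (show n < k by omega)]

section Prime

variable {p : ℕ} [Fact p.Prime]

theorem Nat.cast_choose_mul_add_mul_add {r s : ℕ} (hr : r < p) (hs : s < p) (a b : ℕ) :
    ((p * a + r).choose (p * b + s) : ZMod p) = r.choose s * a.choose b := by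
  have h := (ZMod.intCast_eq_intCast_iff _ _ _).mpr
    (Choose.choose_modEq_choose_mod_mul_choose_div (n := p * a + r) (k := p * b + s) (p := p))
  have hp : 0 < p := (Fact.out : p.Prime).pos
  rw [Nat.mul_add_mod, Nat.mod_eq_of_lt hr, Nat.mul_add_mod, Nat.mod_eq_of_lt hs,
    Nat.mul_add_div hp, Nat.div_eq_of_lt hr, Nat.mul_add_div hp, Nat.div_eq_of_lt hs] at h
  exact_mod_cast h

theorem cast_Sterm_mul_add_mul_add {r s : ℕ} (hr : r < p) (hs : s < p) (a b : ℕ) :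
    (Sterm (p * a + r) (p * b + s) : ZMod p) = Sterm a b * Sterm r s := by
  have hchoose := Nat.cast_choose_mul_add_mul_add hr hs a b
  by_cases hle : s ≤ r ∧ b ≤ a
  · have hsub : p * a + r - (p * b + s) = p * (a - b) + (r - s) := by
      rw [Nat.mul_sub]
      have : p * b ≤ p * a := Nat.mul_le_mul_left p hle.2
      omega
    have hchoose' := Nat.cast_choose_mul_add_mul_add (lt_of_le_of_lt (Nat.sub_le r s) hr) hs
      (a - b) b
    simp only [Sterm, Nat.cast_mul, Nat.cast_pow, hsub, hchoose, hchoose']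
    ring
  · simp only [Sterm, Nat.cast_mul, Nat.cast_pow, hchoose]
    rcases not_and_or.mp hle with h | h <;> simp [Nat.choose_eq_zero_of_lt (not_le.mp h)]

theorem cast_Sseq_mul_add {r : ℕ} (hr : r < p) (a : ℕ) :
    (Sseq (p * a + r) : ZMod p) = Sseq a * Sseq r := by
  have hlt : p * a + r < p * (a + 1) := by rw [Nat.mul_succ]; omega
  rw [Sseq_eq_sum_range_Sterm hlt, Sseq_eq_sum_range_Sterm (Nat.lt_succ_self a),
    Sseq_eq_sum_range_Sterm hr, sum_range_mul_eq_sum_sum]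
  push_cast
  rw [sum_mul_sum]
  exact sum_congr rfl fun b _ => sum_congr rfl fun s hs =>
    cast_Sterm_mul_add_mul_add hr (mem_range.mp hs) a b

theorem cast_Sseq_ne_zero (hdigits : ∀ r < p, (Sseq r : ZMod p) ≠ 0)
    (n : ℕ) : (Sseq n : ZMod p) ≠ 0 := by
  have hp : 1 < p := (Fact.out : p.Prime).one_lt
  induction n using Nat.strong_induction_on with
  | _ n ih =>
    rcases Nat.eq_zero_or_pos n with rfl | hn
    · exact hdigits 0 (by omega)
    rw [← Nat.div_add_mod n p, cast_Sseq_mul_add (Nat.mod_lt n (by omega))]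
    exact mul_ne_zero (ih _ (Nat.div_lt_self hn hp)) (hdigits _ (Nat.mod_lt n (by omega)))

end Prime

theorem Sseq_not_div_three (n : ℕ) : ¬ (3 ∣ Sseq n) := by
  rw [← ZMod.natCast_eq_zero_iff]
  exact cast_Sseq_ne_zero (by decide) n
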